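/- Let f : Δₙ → ℝ (Δₙ the ordered simplex in [0,1]ⁿ) be a symmetric integrable function, i.e. f extends to a permutation-invariant function on [0,1]ⁿ. Then for 1 ≤ i ≤ n and t ∈ [0,1], ∫_{Δₙ ∩ {tᵢ ≤ t}} f = (1/n!) ∫_{A} f, where A = {s ∈ [0,1]ⁿ : #{j : sⱼ ≤ t} ≥ i}. -/

import Mathlib

open Set Real MeasureTheory

def orderedSimplex (n : ℕ) : Set (Fin n → ℝ) :=
  {t | (∀ j, t j ∈ Set.Icc (0:ℝ) 1) ∧ StrictMono t}

/-!
A tuple with distinct coordinates is sorted by exactly one permutation, so for a set `B` of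
increasing tuples the preimages of `B` under the maps `s ↦ s ∘ σ` are pairwise disjoint, and by
the symmetry of `f` and of Lebesgue measure each carries the integral `∫_B f`. Their union is
the set of injective tuples whose sorted rearrangement lies in `B`. For `B = Δₙ ∩ {tᵢ ≤ t}`
this is `A` up to the null set of tuples with a repeated coordinate, because an increasing tuple
has `tᵢ ≤ t` exactly when at least `i` of its coordinates are `≤ t`.
-/

theorem measure_setOf_not_injective {ι : Type*} [Fintype ι] :
    volume {s : ι → ℝ | ¬ Function.Injective s} = 0 := by
  classical
  have hsub : {s : ι → ℝ | ¬ Function.Injective s} ⊆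
      ⋃ (j : ι) (k : ι) (_ : j ≠ k),
        (LinearMap.ker (LinearMap.proj (R := ℝ) (φ := fun _ => ℝ) j - LinearMap.proj k) :
          Set (ι → ℝ)) := by
    intro s hs
    simp only [Function.Injective, not_forall] at hs
    obtain ⟨j, k, hjk, hne⟩ := hs
    exact mem_iUnion₂.2 ⟨j, k, mem_iUnion.2 ⟨hne, by simp [hjk]⟩⟩
  refine measure_mono_null hsub (measure_iUnion_null fun j => measure_iUnion_null fun k =>
    measure_iUnion_null fun hne => Measure.addHaar_submodule _ _ fun h => ?_)
  have : Pi.single j (1 : ℝ) ∈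
      LinearMap.ker (LinearMap.proj (R := ℝ) (φ := fun _ => ℝ) j - LinearMap.proj k) :=
    h ▸ trivial
  simp [hne.symm] at this

theorem measurableSet_setOf_strictMono {ι α : Type*} [Countable ι] [Preorder ι] [LinearOrder α]
    [TopologicalSpace α] [OrderClosedTopology α] [SecondCountableTopology α] [MeasurableSpace α]
    [OpensMeasurableSpace α] : MeasurableSet {s : ι → α | StrictMono s} :=
  measurableSet_setOfPred.2 <| Measurable.forall fun j => Measurable.forall fun k =>
    measurable_const.imp <| measurableSet_setOfPred.1 <|
      measurableSet_lt (measurable_pi_apply j) (measurable_pi_apply k)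

theorem measurableSet_orderedSimplex (n : ℕ) : MeasurableSet (orderedSimplex n) :=
  (MeasurableSet.univ_pi fun _ => measurableSet_Icc (a := (0 : ℝ)) (b := 1)).inter
    measurableSet_setOf_strictMono |>.congr
    (by ext s; simp only [orderedSimplex, mem_inter_iff, mem_univ_pi, mem_ofPred_eq])

theorem card_filter_comp_perm {ι α : Type*} [Fintype ι] (p : α → Prop) [DecidablePred p]
    (s : ι → α) (σ : Equiv.Perm ι) :
    (Finset.univ.filter fun j => p (s (σ j))).card = (Finset.univ.filter fun j => p (s j)).card :=
  Finset.card_equiv σ (by simp)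

section Sorting

variable {α : Type*} [LinearOrder α] {n : ℕ}

theorem Monotone.lt_card_filter_le_iff {u : Fin n → α} (hu : Monotone u) (k : Fin n) (t : α) :
    k.val < (Finset.univ.filter fun j => u j ≤ t).card ↔ u k ≤ t := by
  constructor
  · intro hk
    by_contra! hlt
    have hsub : (Finset.univ.filter fun j => u j ≤ t) ⊆ Finset.Iio k := fun j hj => by
      simp only [Finset.mem_filter, Finset.mem_univ, true_and] at hj
      exact Finset.mem_Iio.2 (lt_of_not_ge fun hkj => (hlt.trans_le (hu hkj)).not_ge hj)
    have := Finset.card_le_card hsub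
    simp only [Fin.card_Iio] at this
    omega
  · intro hk
    have hsub : Finset.Iic k ⊆ Finset.univ.filter fun j => u j ≤ t := fun j hj =>
      Finset.mem_filter.2 ⟨Finset.mem_univ _, (hu (Finset.mem_Iic.1 hj)).trans hk⟩
    have := Finset.card_le_card hsub
    simp only [Fin.card_Iic] at this
    omega

theorem Tuple.perm_eq_of_strictMono_comp {s : Fin n → α} {σ τ : Equiv.Perm (Fin n)}
    (hσ : StrictMono (s ∘ σ)) (hτ : StrictMono (s ∘ τ)) : σ = τ := by
  have hs : Function.Injective s :=
    (Function.Injective.of_comp_iff' s σ.bijective).1 hσ.injective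
  exact Equiv.ext fun j => hs (congrFun (Tuple.unique_monotone hσ.monotone hτ.monotone) j)

theorem mem_iUnion_preimage_comp_perm_iff {P : (Fin n → α) → Prop}
    (hP : ∀ (σ : Equiv.Perm (Fin n)) s, P (s ∘ σ) ↔ P s) {s : Fin n → α} :
    s ∈ ⋃ σ : Equiv.Perm (Fin n), (· ∘ σ) ⁻¹' {u | StrictMono u ∧ P u} ↔
      Function.Injective s ∧ P s := by
  simp only [mem_iUnion, mem_preimage, mem_ofPred_eq]
  constructor
  · rintro ⟨σ, hmono, hPσ⟩
    exact ⟨(Function.Injective.of_comp_iff' s σ.bijective).1 hmono.injective, (hP σ s).1 hPσ⟩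
  · rintro ⟨hs, hPs⟩
    exact ⟨Tuple.sort s, (Tuple.monotone_sort s).strictMono_of_injective
      (hs.comp (Tuple.sort s).injective), (hP _ s).2 hPs⟩

end Sorting

theorem orderedSimplex_inter_setOf_le_eq {n i : ℕ} (hi : 1 ≤ i) (hin : i ≤ n) (t : ℝ) :
    orderedSimplex n ∩ {s | s ⟨i - 1, Nat.sub_one_lt_of_le hi hin⟩ ≤ t} =
      {u | StrictMono u ∧ u ∈ (Set.univ.pi fun _ : Fin n => Icc (0:ℝ) 1) ∩
        {s | i ≤ (Finset.univ.filter (fun j : Fin n => s j ≤ t)).card}} := by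
  have hcount (u : Fin n → ℝ) (hu : StrictMono u) :
      u ⟨i - 1, Nat.sub_one_lt_of_le hi hin⟩ ≤ t ↔
        i ≤ (Finset.univ.filter (fun j : Fin n => u j ≤ t)).card := by
    rw [← hu.monotone.lt_card_filter_le_iff]
    change i - 1 < _ ↔ _
    omega
  ext u
  simp only [orderedSimplex, mem_inter_iff, mem_ofPred_eq, mem_univ_pi]
  exact ⟨fun ⟨⟨hcube, hmono⟩, hle⟩ => ⟨hmono, hcube, (hcount u hmono).1 hle⟩,
    fun ⟨hmono, hcube, hle⟩ => ⟨⟨hcube, hmono⟩, (hcount u hmono).2 hle⟩⟩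

section Symmetrization

variable {α E : Type*} [MeasurableSpace α] [NormedAddCommGroup E] [NormedSpace ℝ E] {n : ℕ}
  (μ : Measure α) [SigmaFinite μ] {f : (Fin n → α) → E}

theorem setIntegral_preimage_comp_perm {σ : Equiv.Perm (Fin n)} (hf : ∀ s, f (s ∘ σ) = f s)
    (B : Set (Fin n → α)) :
    ∫ s in (· ∘ σ) ⁻¹' B, f s ∂Measure.pi (fun _ => μ) =
      ∫ s in B, f s ∂Measure.pi (fun _ => μ) := by
  let e : (Fin n → α) ≃ᵐ (Fin n → α) := .arrowCongr' σ.symm (.refl α)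
  have he : MeasurePreserving e (Measure.pi fun _ => μ) (Measure.pi fun _ => μ) :=
    measurePreserving_arrowCongr' _ _ _ _ fun _ => .id μ
  conv_lhs => rw [show f = fun s => f (e s) from funext fun s => (hf s).symm]
  exact he.setIntegral_preimage_emb e.measurableEmbedding f B

theorem setIntegral_iUnion_preimage_comp_perm [LinearOrder α]
    (hf : ∀ (σ : Equiv.Perm (Fin n)) s, f (s ∘ σ) = f s)
    {B : Set (Fin n → α)} (hBm : MeasurableSet B) (hB : B ⊆ {s | StrictMono s})
    (hint :
      IntegrableOn f (⋃ σ : Equiv.Perm (Fin n), (· ∘ σ) ⁻¹' B) (Measure.pi fun _ => μ)) :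
    ∫ s in ⋃ σ : Equiv.Perm (Fin n), (· ∘ σ) ⁻¹' B, f s ∂Measure.pi (fun _ => μ) =
      n.factorial • ∫ s in B, f s ∂Measure.pi (fun _ => μ) := by
  have hdisj (σ τ : Equiv.Perm (Fin n)) (hne : σ ≠ τ) :
      Disjoint ((· ∘ σ) ⁻¹' B) ((· ∘ τ) ⁻¹' B) :=
    disjoint_left.2 fun s hσ hτ =>
      hne (Tuple.perm_eq_of_strictMono_comp (s := s) (hB hσ) (hB hτ))
  rw [integral_iUnion (fun σ => measurable_pi_lambda _ (fun j => measurable_pi_apply (σ j)) hBm)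
    hdisj hint, tsum_fintype]
  simp only [setIntegral_preimage_comp_perm μ (hf _), Finset.sum_const, Finset.card_univ,
    Fintype.card_perm, Fintype.card_fin]

end Symmetrization

theorem stmt_6 (n : ℕ) (f : (Fin n → ℝ) → ℝ)
    (hint : IntegrableOn f (Set.univ.pi fun _ : Fin n => Icc (0:ℝ) 1))
    (hsym : ∀ σ : Equiv.Perm (Fin n), ∀ s : Fin n → ℝ, f (s ∘ σ) = f s)
    (i : ℕ) (hi : 1 ≤ i) (hin : i ≤ n) (t : ℝ) :
    ∫ s in orderedSimplex n ∩ {s | s ⟨i - 1, by omega⟩ ≤ t}, f s =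
      (1 / (Nat.factorial n : ℝ)) *
        ∫ s in (Set.univ.pi fun _ : Fin n => Icc (0:ℝ) 1) ∩
            {s | i ≤ (Finset.univ.filter (fun j : Fin n => s j ≤ t)).card}, f s := by
  set B := orderedSimplex n ∩ {s | s ⟨i - 1, by omega⟩ ≤ t}
  set A := (Set.univ.pi fun _ : Fin n => Icc (0:ℝ) 1) ∩
    {s | i ≤ (Finset.univ.filter (fun j : Fin n => s j ≤ t)).card}
  have hA_perm (σ : Equiv.Perm (Fin n)) (s : Fin n → ℝ) : s ∘ σ ∈ A ↔ s ∈ A := by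
    simp only [A, mem_inter_iff, mem_univ_pi, mem_ofPred_eq, Function.comp_apply]
    rw [σ.forall_congr_right (q := fun j => s j ∈ Icc 0 1),
      card_filter_comp_perm (· ≤ t) s σ]
  have hB : B = {u | StrictMono u ∧ u ∈ A} := orderedSimplex_inter_setOf_le_eq hi hin t
  have hU :
      ⋃ σ : Equiv.Perm (Fin n), (· ∘ σ) ⁻¹' B = A ∩ {s | Function.Injective s} := by
    ext s
    rw [hB, mem_iUnion_preimage_comp_perm_iff hA_perm]
    exact and_comm
  have hBm : MeasurableSet B := (measurableSet_orderedSimplex n).inter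
    (measurableSet_le (measurable_pi_apply _) measurable_const)
  have hinj : {s : Fin n → ℝ | Function.Injective s} =ᵐ[volume] univ :=
    ae_eq_univ.2 measure_setOf_not_injective
  have hsum : ∫ s in A, f s = n.factorial • ∫ s in B, f s := by
    rw [← setIntegral_congr_set (inter_ae_eq_left_of_ae_eq_univ hinj), ← hU]
    exact setIntegral_iUnion_preimage_comp_perm volume hsym hBm (fun u hu => hu.1.2)
      (hU ▸ hint.mono_set (inter_subset_left.trans inter_subset_left))
  rw [hsum, nsmul_eq_mul]
  field_simp
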